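/- Let S^k and S^{k+1} = T_{j_k}^{a_k, a_k - 1} S^k be consecutive policies in the downshift sequence, with the marginal-resource positivity g_{j_k}^{a_k-1,a_k}(S^{k+1}) > 0, index value m^*_k := f_{j_k}^{a_k-1,a_k}(S^{k+1})/g_{j_k}^{a_k-1,a_k}(S^{k+1}), and V_p(λ, S) := F_p(S) + λ G_p(S). Then V_p(λ, S^k) = V_p(λ, S^{k+1}) - (m^*_k - λ) g_{j_k}^{a_k-1,a_k}(S^{k+1}) x_{p j_k}^{a_k}(S^k). In particular, if x_{p j_k}^{a_k}(S^k) > 0, then V_p(λ, S^k) ≤ V_p(λ, S^{k+1}) iff λ ≤ m^*_k. -/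

import Mathlib

/-!
Since the rows of `P_σ` are probability vectors and `0 < β < 1`, the matrix `1 - β P_σ` is
strictly diagonally dominant, hence invertible, and `p (1 - β P_σ)⁻¹` is the occupancy vector.
Subtracting the Bellman equations of two policies that differ only at `j` gives
`(1 - β P_σ)(X - X') = c e_j`, where `c` is the one-step marginal quantity at `j` evaluated on
`X'`; pairing with `p` yields `p·X - p·X' = c x_{p j}`. The `λ`-combination of this identity for
cost and for resource is the claimed formula, because `m* g*` is minus the marginal cost.
-/

open Matrix Finset

section

variable {N ι : Type*} [Fintype N]

theorem isUnit_det_one_sub_smul [DecidableEq N] {Q : Matrix N N ℝ}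
    (hQ : ∀ i, ∑ j, ‖Q i j‖ ≤ 1) {β : ℝ} (hβ : |β| < 1) : IsUnit (1 - β • Q).det := by
  refine isUnit_iff_ne_zero.mpr (det_ne_zero_of_sum_row_lt_diag fun k => ?_)
  have hoff : ∑ j ∈ univ.erase k, ‖(1 - β • Q) k j‖ = |β| * (∑ j, ‖Q k j‖ - ‖Q k k‖) := by
    rw [← sum_erase_eq_sub (mem_univ k), mul_sum]
    refine sum_congr rfl fun j hj => ?_
    rw [Matrix.sub_apply, one_apply_ne (ne_of_mem_erase hj).symm, zero_sub, norm_neg,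
      Matrix.smul_apply, smul_eq_mul, norm_mul, Real.norm_eq_abs]
  have hdiag : 1 - |β| * ‖Q k k‖ ≤ ‖(1 - β • Q) k k‖ := by
    simpa [Matrix.sub_apply, norm_mul] using norm_sub_norm_le (1 : ℝ) (β * Q k k)
  have hrow := mul_le_mul_of_nonneg_left (hQ k) (abs_nonneg β)
  rw [hoff]
  linarith

abbrev policyMatrix (P : ι → Matrix N N ℝ) (σ : N → ι) : Matrix N N ℝ :=
  Matrix.of fun i j => P (σ i) i j

theorem policyMatrix_mulVec (P : ι → Matrix N N ℝ) (σ : N → ι) (v : N → ℝ) (i : N) :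
    (policyMatrix P σ *ᵥ v) i = (P (σ i) *ᵥ v) i :=
  rfl

theorem one_sub_smul_policyMatrix_mulVec_sub_update [DecidableEq N] (P : ι → Matrix N N ℝ)
    (β : ℝ) (r : ι → N → ℝ) {σ : N → ι} {j : N} {a a' : ι} (hσj : σ j = a) {X X' : N → ℝ}
    (hX : ∀ i, X i = r (σ i) i + β * (P (σ i) *ᵥ X) i)
    (hX' : ∀ i, X' i = r (Function.update σ j a' i) i
      + β * (P (Function.update σ j a' i) *ᵥ X') i) :
    (1 - β • policyMatrix P σ) *ᵥ (X - X') =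
      Pi.single j (r a j - r a' j + β * ((P a - P a') *ᵥ X') j) := by
  funext i
  have hrow : ((1 - β • policyMatrix P σ) *ᵥ (X - X')) i =
      X i - X' i - β * ((P (σ i) *ᵥ X) i - (P (σ i) *ᵥ X') i) := by
    simp only [mulVec_sub, sub_mulVec, one_mulVec, smul_mulVec, Pi.sub_apply, Pi.smul_apply,
      smul_eq_mul, policyMatrix_mulVec]
    ring
  rw [hrow]
  have hXi := hX i
  have hX'i := hX' i
  by_cases hi : i = j
  · subst hi
    rw [Function.update_self] at hX'i
    rw [hσj] at hXi ⊢
    rw [Pi.single_eq_same, sub_mulVec, Pi.sub_apply]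
    linarith
  · rw [Function.update_of_ne hi] at hX'i
    rw [Pi.single_eq_of_ne hi]
    linarith

theorem dotProduct_eq_mul_vecMul_inv_of_mulVec_eq_single {R : Type*} [CommRing R]
    [DecidableEq N] {M : Matrix N N R} (hM : IsUnit M.det) {v : N → R} {j : N} {c : R}
    (hv : M *ᵥ v = Pi.single j c) (p : N → R) :
    p ⬝ᵥ v = c * (p ᵥ* M⁻¹) j := by
  have : v = M⁻¹ *ᵥ Pi.single j c := by
    rw [← hv, mulVec_mulVec, nonsing_inv_mul M hM, one_mulVec]
  rw [this, dotProduct_mulVec, dotProduct_single, mul_comm]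

theorem dotProduct_sub_dotProduct_of_update [DecidableEq N] (P : ι → Matrix N N ℝ)
    (hP : ∀ a i, ∑ j, ‖P a i j‖ ≤ 1) {β : ℝ} (hβ : |β| < 1) (r : ι → N → ℝ) {σ : N → ι}
    {j : N} {a a' : ι} (hσj : σ j = a) {X X' : N → ℝ}
    (hX : ∀ i, X i = r (σ i) i + β * (P (σ i) *ᵥ X) i)
    (hX' : ∀ i, X' i = r (Function.update σ j a' i) i
      + β * (P (Function.update σ j a' i) *ᵥ X') i) (p : N → ℝ) :
    p ⬝ᵥ X - p ⬝ᵥ X' =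
      (r a j - r a' j + β * ((P a - P a') *ᵥ X') j) *
        (p ᵥ* (1 - β • policyMatrix P σ)⁻¹) j := by
  rw [← dotProduct_sub]
  exact dotProduct_eq_mul_vecMul_inv_of_mulVec_eq_single
    (isUnit_det_one_sub_smul (fun i => hP (σ i) i) hβ)
    (one_sub_smul_policyMatrix_mulVec_sub_update P β r hσj hX hX') p

end

theorem stmt17_general {N : Type*} [Fintype N] [DecidableEq N] {A : ℕ}
    (P : Fin (A + 1) → Matrix N N ℝ)
    (hP0 : ∀ a i j, 0 ≤ P a i j) (hP1 : ∀ a i, ∑ j, P a i j = 1)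
    (β : ℝ) (hβ0 : 0 < β) (hβ1 : β < 1)
    (h q : Fin (A + 1) → N → ℝ)
    (σ : N → Fin (A + 1)) (jk : N) (ak : Fin (A + 1))
    (hja : σ jk = ak)
    (σ' : N → Fin (A + 1)) (hσ' : σ' = Function.update σ jk (ak - 1))
    (F : N → ℝ) (hF : ∀ i, F i = h (σ i) i + β * (P (σ i) *ᵥ F) i)
    (G : N → ℝ) (hG : ∀ i, G i = q (σ i) i + β * (P (σ i) *ᵥ G) i)
    (F' : N → ℝ) (hF' : ∀ i, F' i = h (σ' i) i + β * (P (σ' i) *ᵥ F') i)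
    (G' : N → ℝ) (hG' : ∀ i, G' i = q (σ' i) i + β * (P (σ' i) *ᵥ G') i)
    (gk : ℝ)
    (hgk : gk = q ak jk - q (ak - 1) jk + β * ((P ak - P (ak - 1)) *ᵥ G') jk)
    (hgkpos : 0 < gk)
    (mk : ℝ)
    (hmk : mk = (h (ak - 1) jk - h ak jk + β * ((P (ak - 1) - P ak) *ᵥ F') jk) / gk)
    (p : N → ℝ)
    (xk : ℝ)
    (hxk : xk = (p ᵥ* (((1 : Matrix N N ℝ) -
      β • Matrix.of (fun i j => P (σ i) i j))⁻¹)) jk)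
    (lam : ℝ) :
    p ⬝ᵥ F + lam * (p ⬝ᵥ G) = (p ⬝ᵥ F' + lam * (p ⬝ᵥ G')) - (mk - lam) * gk * xk
    ∧ (0 < xk →
        (p ⬝ᵥ F + lam * (p ⬝ᵥ G) ≤ p ⬝ᵥ F' + lam * (p ⬝ᵥ G') ↔ lam ≤ mk)) := by
  subst hσ'
  have hP : ∀ a i, ∑ j, ‖P a i j‖ ≤ 1 := fun a i => by
    simp_rw [Real.norm_of_nonneg (hP0 a i _), hP1 a i, le_refl]
  have hβ : |β| < 1 := by rwa [abs_of_pos hβ0]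
  have hFdiff := dotProduct_sub_dotProduct_of_update P hP hβ h hja hF hF' p
  have hGdiff := dotProduct_sub_dotProduct_of_update P hP hβ q hja hG hG' p
  rw [← hxk] at hFdiff hGdiff
  rw [← hgk] at hGdiff
  have hmkgk : mk * gk = h (ak - 1) jk - h ak jk + β * ((P (ak - 1) - P ak) *ᵥ F') jk := by
    rw [hmk, div_mul_cancel₀ _ hgkpos.ne']
  simp only [sub_mulVec, Pi.sub_apply] at hFdiff hmkgk
  have hkey : p ⬝ᵥ F + lam * (p ⬝ᵥ G) =
      (p ⬝ᵥ F' + lam * (p ⬝ᵥ G')) - (mk - lam) * gk * xk := by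
    linear_combination hFdiff + lam * hGdiff + xk * hmkgk
  refine ⟨hkey, fun hxkpos => ?_⟩
  rw [hkey, sub_le_self_iff, mul_nonneg_iff_of_pos_right hxkpos,
    mul_nonneg_iff_of_pos_right hgkpos, sub_nonneg]

/-- Lemma 5.4(f): for consecutive policies `S^k` (policy `σ`) and
`S^{k+1} = T_{jk}^{ak, ak-1} S^k` (policy `σ'`) in the downshift sequence, with
`g* := g_{jk}^{ak-1,ak}(S^{k+1}) > 0`, `m* := f_{jk}^{ak-1,ak}(S^{k+1}) / g*`,
and `V_p(λ,S) := F_p(S) + λ G_p(S)`: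
`V_p(λ, S^k) = V_p(λ, S^{k+1}) - (m* - λ) g* x_{p,jk}^{ak}(S^k)`; in
particular, if `x_{p,jk}^{ak}(S^k) > 0`, then
`V_p(λ, S^k) ≤ V_p(λ, S^{k+1})` iff `λ ≤ m*`. -/
theorem stmt17 {N : Type*} [Fintype N] [DecidableEq N] {A : ℕ}
    (P : Fin (A + 1) → Matrix N N ℝ)
    (hP0 : ∀ a i j, 0 ≤ P a i j) (hP1 : ∀ a i, ∑ j, P a i j = 1)
    (β : ℝ) (hβ0 : 0 < β) (hβ1 : β < 1)
    (h q : Fin (A + 1) → N → ℝ)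
    (σ : N → Fin (A + 1)) (jk : N) (ak : Fin (A + 1)) (hak : ak ≠ 0)
    (hja : σ jk = ak)
    (σ' : N → Fin (A + 1)) (hσ' : σ' = Function.update σ jk (ak - 1))
    (F : N → ℝ) (hF : ∀ i, F i = h (σ i) i + β * (P (σ i) *ᵥ F) i)
    (G : N → ℝ) (hG : ∀ i, G i = q (σ i) i + β * (P (σ i) *ᵥ G) i)
    (F' : N → ℝ) (hF' : ∀ i, F' i = h (σ' i) i + β * (P (σ' i) *ᵥ F') i)
    (G' : N → ℝ) (hG' : ∀ i, G' i = q (σ' i) i + β * (P (σ' i) *ᵥ G') i)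
    (gk : ℝ)
    (hgk : gk = q ak jk - q (ak - 1) jk + β * ((P ak - P (ak - 1)) *ᵥ G') jk)
    (hgkpos : 0 < gk)
    (mk : ℝ)
    (hmk : mk = (h (ak - 1) jk - h ak jk + β * ((P (ak - 1) - P ak) *ᵥ F') jk) / gk)
    (p : N → ℝ)
    (xk : ℝ)
    (hxk : xk = (p ᵥ* (((1 : Matrix N N ℝ) -
      β • Matrix.of (fun i j => P (σ i) i j))⁻¹)) jk)
    (lam : ℝ) :
    p ⬝ᵥ F + lam * (p ⬝ᵥ G) = (p ⬝ᵥ F' + lam * (p ⬝ᵥ G')) - (mk - lam) * gk * xk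
    ∧ (0 < xk →
        (p ⬝ᵥ F + lam * (p ⬝ᵥ G) ≤ p ⬝ᵥ F' + lam * (p ⬝ᵥ G') ↔ lam ≤ mk)) :=
  stmt17_general P hP0 hP1 β hβ0 hβ1 h q σ jk ak hja σ' hσ' F hF G hG F' hF' G' hG' gk hgk hgkpos mk
    hmk p xk hxk lam
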